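/- Let α ∈ [0,2] and φ ∈ K^α. Then for all ξ, η ∈ ℝ³ one has |φ(ξ) − φ(η)| ≤ √2 · |ξ − η|^{α/2} · ‖φ − 1‖_α^{1/2}. -/

import Mathlib

open MeasureTheory Real Filter Topology Metric
open scoped ENNReal NNReal

noncomputable section

/-- ℝ³ as a Euclidean space. -/
abbrev E3 := EuclideanSpace ℝ (Fin 3)

/-- The unit sphere S² in ℝ³. -/
abbrev S2 := Metric.sphere (0 : E3) 1

/-- The surface measure on the unit sphere S² (total mass 4π). -/
def sphMeasure : Measure S2 := (volume : Measure E3).toSphere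

/-- ξ⁺ = (ξ + |ξ|σ)/2. -/
def xiP (ξ : E3) (σ : S2) : E3 := (2 : ℝ)⁻¹ • (ξ + ‖ξ‖ • (σ : E3))

/-- ξ⁻ = (ξ − |ξ|σ)/2. -/
def xiM (ξ : E3) (σ : S2) : E3 := (2 : ℝ)⁻¹ • (ξ - ‖ξ‖ • (σ : E3))

/-- The kernel factor B(ξ·σ/|ξ|). -/
def kern (B : ℝ → ℝ) (ξ : E3) (σ : S2) : ℝ := B ((inner ℝ ξ (σ : E3) : ℝ) / ‖ξ‖)

/-- φ is a characteristic function: the Fourier transform of a Borel probability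
measure on ℝ³, i.e. φ(ξ) = ∫ exp(−i v·ξ) dμ(v). -/
def IsCharFun (φ : E3 → ℂ) : Prop :=
  ∃ μ : Measure E3, IsProbabilityMeasure μ ∧
    ∀ ξ : E3, φ ξ = ∫ v, Complex.exp (-(Complex.I * ((inner ℝ v ξ : ℝ) : ℂ))) ∂μ

/-- ‖φ − ψ‖_α = sup_{ξ ≠ 0} |φ(ξ) − ψ(ξ)|/|ξ|^α, as a value in [0,∞]. -/
def dAlpha (α : ℝ) (φ ψ : E3 → ℂ) : ℝ≥0∞ :=
  ⨆ (ξ : E3) (_ : ξ ≠ 0), (‖φ ξ - ψ ξ‖₊ : ℝ≥0∞) / (‖ξ‖₊ : ℝ≥0∞) ^ α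

/-- Membership in the space K^α: a characteristic function with ‖φ−1‖_α < ∞. -/
def memK (α : ℝ) (φ : E3 → ℂ) : Prop := IsCharFun φ ∧ dAlpha α φ 1 ≠ ⊤

/-!
Writing φ(ξ) = ∫ e^{-i v·ξ} dμ(v), the difference φ(ξ) − φ(η) is the integral of
e^{-i v·ξ} − e^{-i v·η}, whose squared modulus is 2 − 2 cos(v·(ξ − η)). Jensen's inequality
therefore gives |φ(ξ) − φ(η)|² ≤ 2 Re(1 − φ(ξ − η)) ≤ 2 |φ(ξ − η) − 1|, and the last factor is
at most ‖φ − 1‖_α |ξ − η|^α.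
-/

open Complex
open scoped InnerProductSpace

section Jensen

variable {Ω : Type*} [MeasurableSpace Ω] {μ : Measure Ω} [IsProbabilityMeasure μ]

lemma sq_integral_le_integral_sq {f : Ω → ℝ} (hf : MemLp f 2 μ) :
    (∫ x, f x ∂μ) ^ 2 ≤ ∫ x, f x ^ 2 ∂μ := by
  have h := ProbabilityTheory.variance_nonneg f μ
  rw [ProbabilityTheory.variance_eq_sub hf] at h
  simp only [Pi.pow_apply] at h
  linarith

lemma norm_integral_sq_le_integral_norm_sq {F : Type*} [NormedAddCommGroup F]
    [NormedSpace ℝ F] {f : Ω → F} (hf : MemLp f 2 μ) :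
    ‖∫ x, f x ∂μ‖ ^ 2 ≤ ∫ x, ‖f x‖ ^ 2 ∂μ :=
  (pow_le_pow_left₀ (norm_nonneg _) (norm_integral_le_integral_norm f) 2).trans
    (sq_integral_le_integral_sq hf.norm)

end Jensen

lemma norm_exp_mul_I_sub_exp_mul_I_sq (a b : ℝ) :
    ‖cexp (a * I) - cexp (b * I)‖ ^ 2 = 2 * (1 - Real.cos (a - b)) := by
  rw [Complex.sq_norm, Complex.normSq_apply]
  simp only [sub_re, sub_im, exp_ofReal_mul_I_re, exp_ofReal_mul_I_im, Real.cos_sub]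
  nlinarith [Real.sin_sq_add_cos_sq a, Real.sin_sq_add_cos_sq b]

section CharFun

variable {E : Type*} [NormedAddCommGroup E] [InnerProductSpace ℝ E] [MeasurableSpace E]
  [OpensMeasurableSpace E] (μ : Measure E) [IsProbabilityMeasure μ]

lemma integrable_exp_inner_mul_I (t : E) : Integrable (fun x ↦ cexp (⟪x, t⟫_ℝ * I)) μ :=
  Integrable.of_bound (by fun_prop) 1 (.of_forall fun _ ↦ (norm_exp_ofReal_mul_I _).le)

lemma re_charFun (t : E) : (charFun μ t).re = ∫ x, Real.cos ⟪x, t⟫_ℝ ∂μ := by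
  rw [charFun_apply, ← RCLike.re_eq_complex_re,
    ← integral_re (integrable_exp_inner_mul_I μ t)]
  simp only [RCLike.re_eq_complex_re, exp_ofReal_mul_I_re]

lemma norm_charFun_sub_charFun_sq_le (s t : E) :
    ‖charFun μ s - charFun μ t‖ ^ 2 ≤ 2 * (1 - (charFun μ (s - t)).re) := by
  have hdiff : MemLp (fun x ↦ cexp (⟪x, s⟫_ℝ * I) - cexp (⟪x, t⟫_ℝ * I)) 2 μ :=
    MemLp.of_bound (by fun_prop) 2 (.of_forall fun x ↦ (norm_sub_le _ _).trans (by
      simp only [norm_exp_ofReal_mul_I]; norm_num))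
  calc ‖charFun μ s - charFun μ t‖ ^ 2
      = ‖∫ x, (cexp (⟪x, s⟫_ℝ * I) - cexp (⟪x, t⟫_ℝ * I)) ∂μ‖ ^ 2 := by
        rw [charFun_apply, charFun_apply, integral_sub (integrable_exp_inner_mul_I μ s)
          (integrable_exp_inner_mul_I μ t)]
    _ ≤ ∫ x, ‖cexp (⟪x, s⟫_ℝ * I) - cexp (⟪x, t⟫_ℝ * I)‖ ^ 2 ∂μ :=
        norm_integral_sq_le_integral_norm_sq hdiff
    _ = ∫ x, 2 * (1 - Real.cos ⟪x, s - t⟫_ℝ) ∂μ := by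
        simp only [norm_exp_mul_I_sub_exp_mul_I_sq, inner_sub_right]
    _ = 2 * (1 - (charFun μ (s - t)).re) := by
        rw [integral_const_mul, integral_sub (integrable_const 1)
          (Integrable.of_bound (by fun_prop) 1 (.of_forall fun _ ↦ Real.abs_cos_le_one _)),
          re_charFun]
        simp

end CharFun

lemma IsCharFun.exists_eq_charFun_neg {φ : E3 → ℂ} (hφ : IsCharFun φ) :
    ∃ μ : Measure E3, IsProbabilityMeasure μ ∧ ∀ ξ, φ ξ = charFun μ (-ξ) := by
  obtain ⟨μ, hμ, hrep⟩ := hφ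
  refine ⟨μ, hμ, fun ξ ↦ ?_⟩
  simp only [hrep ξ, charFun_apply, inner_neg_right, ofReal_neg, neg_mul, mul_comm I]

lemma IsCharFun.nnnorm_sub_sq_le {φ : E3 → ℂ} (hφ : IsCharFun φ) (ξ η : E3) :
    ‖φ ξ - φ η‖₊ ^ 2 ≤ 2 * ‖φ (ξ - η) - 1‖₊ := by
  rw [← NNReal.coe_le_coe]
  push_cast
  obtain ⟨μ, hμ, hφμ⟩ := hφ.exists_eq_charFun_neg
  have hre : 1 - (charFun μ (-ξ - -η)).re ≤ ‖charFun μ (-(ξ - η)) - 1‖ := by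
    rw [neg_sub_neg, ← neg_sub ξ η, norm_sub_rev, ← one_re, ← sub_re]
    exact re_le_norm _
  rw [hφμ, hφμ, hφμ]
  linarith [norm_charFun_sub_charFun_sq_le μ (-ξ) (-η)]

lemma nnnorm_sub_le_dAlpha_mul {α : ℝ} {φ ψ : E3 → ℂ} {ξ : E3} (hξ : ξ ≠ 0) :
    (‖φ ξ - ψ ξ‖₊ : ℝ≥0∞) ≤ dAlpha α φ ψ * (‖ξ‖₊ : ℝ≥0∞) ^ α := by
  have hξ' : (‖ξ‖₊ : ℝ≥0∞) ≠ 0 := by simpa using hξ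
  have hpos : (‖ξ‖₊ : ℝ≥0∞) ^ α ≠ 0 :=
    (ENNReal.rpow_pos (pos_iff_ne_zero.2 hξ') ENNReal.coe_ne_top).ne'
  refine (ENNReal.div_le_iff hpos (ENNReal.rpow_ne_top_of_ne_zero hξ' ENNReal.coe_ne_top)).1 ?_
  exact le_iSup₂ (f := fun (ρ : E3) (_ : ρ ≠ 0) ↦
    (‖φ ρ - ψ ρ‖₊ : ℝ≥0∞) / (‖ρ‖₊ : ℝ≥0∞) ^ α) ξ hξ

theorem holder_continuity_of_memK_general (α : ℝ) (φ : E3 → ℂ)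
    (hφ : memK α φ) (ξ η : E3) :
    (‖φ ξ - φ η‖₊ : ℝ≥0∞) ≤
      ENNReal.ofReal (Real.sqrt 2) * (‖ξ - η‖₊ : ℝ≥0∞) ^ (α/2) *
        (dAlpha α φ 1) ^ ((1 : ℝ)/2) := by
  rcases eq_or_ne ξ η with rfl | hne
  · simp
  have hsq : (‖φ ξ - φ η‖₊ : ℝ≥0∞) ^ 2 ≤ 2 * (dAlpha α φ 1 * (‖ξ - η‖₊ : ℝ≥0∞) ^ α) :=
    calc (‖φ ξ - φ η‖₊ : ℝ≥0∞) ^ 2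
        ≤ 2 * (‖φ (ξ - η) - 1‖₊ : ℝ≥0∞) := by exact_mod_cast hφ.1.nnnorm_sub_sq_le ξ η
      _ ≤ 2 * (dAlpha α φ 1 * (‖ξ - η‖₊ : ℝ≥0∞) ^ α) := by
        gcongr
        exact nnnorm_sub_le_dAlpha_mul (ψ := 1) (sub_ne_zero.2 hne)
  have hsqrt2 : ENNReal.ofReal (Real.sqrt 2) = 2 ^ ((1 : ℝ) / 2) := by
    rw [Real.sqrt_eq_rpow, ← ENNReal.ofReal_rpow_of_nonneg zero_le_two (by norm_num),
      ENNReal.ofReal_ofNat]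
  calc (‖φ ξ - φ η‖₊ : ℝ≥0∞) = ((‖φ ξ - φ η‖₊ : ℝ≥0∞) ^ 2) ^ ((1 : ℝ) / 2) := by
        rw [one_div]
        exact_mod_cast (ENNReal.pow_rpow_inv_natCast two_ne_zero _).symm
    _ ≤ (2 * (dAlpha α φ 1 * (‖ξ - η‖₊ : ℝ≥0∞) ^ α)) ^ ((1 : ℝ) / 2) := by gcongr
    _ = _ := by
        rw [ENNReal.mul_rpow_of_nonneg _ _ (by norm_num),
          ENNReal.mul_rpow_of_nonneg _ _ (by norm_num), ← ENNReal.rpow_mul, mul_one_div, hsqrt2]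
        ring

/-- For φ ∈ K^α and all ξ, η ∈ ℝ³: |φ(ξ) − φ(η)| ≤ √2 |ξ−η|^{α/2} ‖φ−1‖_α^{1/2}. -/
theorem holder_continuity_of_memK (α : ℝ) (hα : α ∈ Set.Icc (0 : ℝ) 2) (φ : E3 → ℂ)
    (hφ : memK α φ) (ξ η : E3) :
    (‖φ ξ - φ η‖₊ : ℝ≥0∞) ≤
      ENNReal.ofReal (Real.sqrt 2) * (‖ξ - η‖₊ : ℝ≥0∞) ^ (α/2) *
        (dAlpha α φ 1) ^ ((1 : ℝ)/2) :=
  holder_continuity_of_memK_general α φ hφ ξ η
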